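/- For every μ ∈ ℝ and every T_0 > 0 there is a constant C > 0 such that for all temperatures T, T_c ≥ T_0 the function F_{T,T_c} := 2T Σ_{n∈ℤ} |2n+1| [ |g_0^{iω_n^T}| * |g_0^{iω_n^{T_c}}| * |g_0^{−iω_n^T}| + |g_0^{iω_n^{T_c}}| * |g_0^{−iω_n^T}| * |g_0^{−iω_n^{T_c}}| ] satisfies ‖F_{T,T_c}‖_{L¹(ℝ³)} ≤ C; in particular the defining series converges in L¹(ℝ³). -/

import Mathlib

open MeasureTheory

/-- The free resolvent kernel `g_0^z(x) = -(1/(4π|x|)) e^{-√(-(z+μ)) |x|}` on `ℝ³`,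
with the principal branch of the complex square root realized as `w ^ (1/2 : ℂ)`. -/
noncomputable def g0 (μ : ℝ) (z : ℂ) (x : EuclideanSpace ℝ (Fin 3)) : ℂ :=
  (↑(-(4 * Real.pi * ‖x‖)⁻¹) : ℂ) *
    Complex.exp (-((-(z + (μ : ℂ))) ^ ((1 : ℂ) / 2)) * (‖x‖ : ℂ))

/-- The triple convolution `(|g_0^{w₁}| * |g_0^{w₂}| * |g_0^{w₃}|)(x)`. -/
noncomputable def conv3 (μ : ℝ) (w₁ w₂ w₃ : ℂ) (x : EuclideanSpace ℝ (Fin 3)) : ℝ :=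
  ∫ y : EuclideanSpace ℝ (Fin 3), ∫ z : EuclideanSpace ℝ (Fin 3),
    ‖g0 μ w₁ (x - y)‖ * ‖g0 μ w₂ (y - z)‖ * ‖g0 μ w₃ z‖

/-- The `n`-th summand of `F_{T,T_c}`:
`|2n+1| [ |g_0^{iω_n^T}| * |g_0^{iω_n^{T_c}}| * |g_0^{-iω_n^T}|
  + |g_0^{iω_n^{T_c}}| * |g_0^{-iω_n^T}| * |g_0^{-iω_n^{T_c}}| ]` with `ω_n^T = π(2n+1)T`. -/
noncomputable def FTTc_term (μ : ℝ) (T Tc : ℝ) (n : ℤ) (x : EuclideanSpace ℝ (Fin 3)) : ℝ :=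
  |2 * (n : ℝ) + 1| *
    (conv3 μ (Complex.I * ((Real.pi * (2 * (n : ℝ) + 1) * T : ℝ) : ℂ))
        (Complex.I * ((Real.pi * (2 * (n : ℝ) + 1) * Tc : ℝ) : ℂ))
        (-(Complex.I * ((Real.pi * (2 * (n : ℝ) + 1) * T : ℝ) : ℂ))) x
      + conv3 μ (Complex.I * ((Real.pi * (2 * (n : ℝ) + 1) * Tc : ℝ) : ℂ))
          (-(Complex.I * ((Real.pi * (2 * (n : ℝ) + 1) * T : ℝ) : ℂ)))
          (-(Complex.I * ((Real.pi * (2 * (n : ℝ) + 1) * Tc : ℝ) : ℂ))) x)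

namespace Stmt18Aux

open Set Convolution

local notation "E3" => EuclideanSpace ℝ (Fin 3)

/-! ### Radial integration on `ℝ³` -/

lemma integrable_radial {f : ℝ → ℝ}
    (h : IntegrableOn (fun r => f r * r ^ 2) (Ioi (0:ℝ))) :
    Integrable (fun x : E3 => f ‖x‖) := by
  have h5 : Integrable ((fun r : ℝ => f r * r ^ 2) ∘ (Subtype.val : Ioi (0:ℝ) → ℝ))
      ((volume : Measure ℝ).comap Subtype.val) := by
    have := (MeasurableEmbedding.subtype_coe (measurableSet_Ioi (a := (0:ℝ)))).integrableOn_iff_comap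
      (f := fun r : ℝ => f r * r ^ 2) (μ := volume) (s := Ioi (0:ℝ))
      (by rw [Subtype.range_coe])
    rw [this] at h
    simpa [IntegrableOn] using h
  have h4 : Integrable (f ∘ (Subtype.val : Ioi (0:ℝ) → ℝ))
      (Measure.volumeIoiPow 2) := by
    rw [Measure.volumeIoiPow]
    rw [integrable_withDensity_iff (by measurability) (by
      refine Filter.Eventually.of_forall fun x => ?_
      exact ENNReal.ofReal_lt_top)]
    refine h5.congr ?_
    refine Filter.Eventually.of_forall fun r => ?_
    simp [Function.comp, ENNReal.toReal_ofReal (by positivity : (0:ℝ) ≤ (r:ℝ)^2)]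
  have h3 : Integrable (f ∘ (Subtype.val : Ioi (0:ℝ) → ℝ) ∘ Prod.snd)
      ((volume : Measure E3).toSphere.prod (Measure.volumeIoiPow 2)) := by
    have := (integrable_const (1:ℝ) (μ := (volume : Measure E3).toSphere)).smul_prod h4
    simpa [Function.comp_def] using this
  have h2 : Integrable (fun x : ({(0:E3)}ᶜ : Set E3) => f ‖(x : E3)‖)
      ((volume : Measure E3).comap Subtype.val) := by
    have hmp := (volume : Measure E3).measurePreserving_homeomorphUnitSphereProd
    have dim3 : Module.finrank ℝ (EuclideanSpace ℝ (Fin 3)) = 3 := by simp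
    rw [dim3] at hmp
    have := hmp.integrable_comp_emb (Homeomorph.measurableEmbedding _)
      (g := f ∘ (Subtype.val : Ioi (0:ℝ) → ℝ) ∘ Prod.snd)
    rw [← this] at h3
    refine h3.congr (Filter.Eventually.of_forall fun x => ?_)
    simp [Function.comp, homeomorphUnitSphereProd]
  have h1 : IntegrableOn (fun x : E3 => f ‖x‖) ({(0:E3)}ᶜ) volume := by
    rw [(MeasurableEmbedding.subtype_coe
      (measurableSet_singleton (0:E3)).compl).integrableOn_iff_comap
      (by rw [Subtype.range_coe])]
    simpa [IntegrableOn, Function.comp_def] using h2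
  rwa [IntegrableOn, MeasureTheory.restrict_compl_singleton] at h1

/-! ### The principal square root -/

lemma sqrt_re_pos {w : ℂ} (hw : w.im ≠ 0) : 0 < (w ^ ((1:ℂ)/2)).re := by
  have hw0 : w ≠ 0 := by intro h; simp [h] at hw
  rw [Complex.cpow_def_of_ne_zero hw0]
  rw [Complex.exp_re]
  have h1 : (Complex.log w * ((1:ℂ)/2)).im = w.arg / 2 := by
    simp [Complex.mul_im, Complex.log_im, Complex.log_re]
    ring
  have h2 : |w.arg / 2| < Real.pi / 2 := by
    have hlt : |w.arg| < Real.pi := by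
      rcases lt_or_eq_of_le (Complex.abs_arg_le_pi w) with h | h
      · exact h
      · exfalso
        rcases abs_eq (le_of_lt Real.pi_pos) |>.mp h with h' | h'
        · exact hw ((Complex.arg_eq_pi_iff.mp h').2)
        · exact absurd h' (ne_of_gt (Complex.neg_pi_lt_arg w))
    rw [abs_div]
    simp only [abs_two]
    linarith [abs_nonneg w.arg]
  have hcos : 0 < Real.cos ((Complex.log w * ((1:ℂ)/2)).im) := by
    rw [h1]
    apply Real.cos_pos_of_mem_Ioo
    constructor <;> [linarith [abs_lt.mp h2]; linarith [abs_lt.mp h2]]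
  positivity

lemma sqrt_re_sq {w : ℂ} (hw : w.im ≠ 0) :
    2 * (w ^ ((1:ℂ)/2)).re ^ 2 = ‖w‖ + w.re := by
  have hw0 : w ≠ 0 := by intro h; simp [h] at hw
  set s := w ^ ((1:ℂ)/2) with hs
  have hsq : s ^ 2 = w := by
    rw [hs]
    have : (1:ℂ)/2 = ((2:ℕ):ℂ)⁻¹ := by norm_num
    rw [this]
    exact Complex.cpow_nat_inv_pow w two_ne_zero
  have hre : w.re = s.re ^ 2 - s.im ^ 2 := by
    rw [← hsq]; simp [pow_two, Complex.mul_re]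
  have habs : ‖w‖ = s.re ^ 2 + s.im ^ 2 := by
    rw [← hsq, norm_pow, ← Complex.normSq_eq_norm_sq, Complex.normSq_apply]; ring
  rw [hre, habs]; ring

/-- The real part of the square root appearing in `g0`. -/
noncomputable def Ar (μ : ℝ) (z : ℂ) : ℝ := ((-(z + (μ : ℂ))) ^ ((1:ℂ)/2)).re

lemma Ar_pos (μ : ℝ) {z : ℂ} (hz : z.im ≠ 0) : 0 < Ar μ z := by
  apply sqrt_re_pos
  simpa using hz

lemma Ar_sq (μ : ℝ) {z : ℂ} (hre : z.re = 0) (hz : z.im ≠ 0) :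
    (Ar μ z) ^ 2 = (Real.sqrt (μ^2 + z.im^2) - μ) / 2 := by
  have h := sqrt_re_sq (w := -(z + (μ:ℂ))) (by simpa using hz)
  have habs : ‖-(z + (μ:ℂ))‖ = Real.sqrt (μ^2 + z.im^2) := by
    rw [Complex.norm_def, Complex.normSq_apply]
    simp [hre]
    ring_nf
  have hre' : (-(z + (μ:ℂ))).re = -μ := by simp [hre]
  rw [habs, hre'] at h
  unfold Ar
  linarith

/-! ### `L¹`-estimates for `|g0|` -/

/-- Normalizing constant for the radial integral on `ℝ³`. -/
noncomputable def Kc : ℝ := 3 * (volume (Metric.ball (0:E3) 1)).toReal * (4*Real.pi)⁻¹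

lemma Kc_nonneg : 0 ≤ Kc := by
  unfold Kc
  positivity

lemma abs_g0 (μ : ℝ) (z : ℂ) (x : E3) :
    ‖g0 μ z x‖ = (4*Real.pi*‖x‖)⁻¹ * Real.exp (-(Ar μ z) * ‖x‖) := by
  unfold g0 Ar
  rw [norm_mul, Complex.norm_exp]
  congr 1
  · rw [Complex.norm_real, Real.norm_eq_abs, abs_neg, abs_of_nonneg]
    positivity
  · congr 1
    simp [Complex.mul_re]

lemma g0_integrable (μ : ℝ) (z : ℂ) (ha : 0 < Ar μ z) :
    Integrable (fun x : E3 => ‖g0 μ z x‖) := by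
  set a := Ar μ z
  have key : IntegrableOn (fun r : ℝ => ((4*Real.pi*r)⁻¹ * Real.exp (-a * r)) * r ^ 2)
      (Ioi (0:ℝ)) := by
    have base := integrableOn_rpow_mul_exp_neg_mul_rpow (p := 1) (s := 1) (b := a)
      (by norm_num) one_pos ha
    have base2 : IntegrableOn (fun r : ℝ => (4*Real.pi)⁻¹ * (r * Real.exp (-a * r)))
        (Ioi (0:ℝ)) := by
      refine IntegrableOn.congr_fun (base.const_mul ((4*Real.pi)⁻¹)) (fun r hr => ?_)
        measurableSet_Ioi
      simp [Real.rpow_one]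
    refine base2.congr_fun (fun r hr => ?_) measurableSet_Ioi
    have hr0 : 0 < r := hr
    field_simp
  have := integrable_radial key
  refine this.congr ?_
  refine Filter.Eventually.of_forall fun x => ?_
  exact (abs_g0 μ z x).symm

lemma g0_integral (μ : ℝ) (z : ℂ) (ha : 0 < Ar μ z) :
    ∫ x : E3, ‖g0 μ z x‖ = Kc * ((Ar μ z) ^ 2)⁻¹ := by
  set a := Ar μ z
  have h1 : ∫ x : E3, ‖g0 μ z x‖
      = ∫ x : E3, (fun r : ℝ => (4*Real.pi*r)⁻¹ * Real.exp (-a * r)) ‖x‖ := by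
    congr 1; ext x; rw [abs_g0]
  rw [h1, integral_fun_norm_addHaar volume (fun r : ℝ => (4*Real.pi*r)⁻¹ * Real.exp (-a * r))]
  have dim3 : Module.finrank ℝ (EuclideanSpace ℝ (Fin 3)) = 3 := by simp
  rw [dim3]
  have h2 : ∫ y in Ioi (0:ℝ), y ^ (3-1) • ((4*Real.pi*y)⁻¹ * Real.exp (-a * y))
      = (4*Real.pi)⁻¹ * ∫ y in Ioi (0:ℝ), y ^ ((2:ℝ)-1) * Real.exp (-(a * y)) := by
    rw [← integral_const_mul]
    refine setIntegral_congr_fun measurableSet_Ioi fun r hr => ?_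
    have hr0 : (0:ℝ) < r := hr
    have : r ^ ((2:ℝ)-1) = r := by
      norm_num
    rw [this]
    simp only [smul_eq_mul]
    norm_num
    field_simp
  rw [h2, Real.integral_rpow_mul_exp_neg_mul_Ioi (by norm_num) ha, Real.Gamma_two]
  have hrp : ((1:ℝ)/a) ^ (2:ℝ) = (a^2)⁻¹ := by
    rw [show ((2:ℝ)) = ((2:ℕ):ℝ) by norm_num, Real.rpow_natCast]
    rw [div_pow, one_pow, one_div]
  rw [hrp]
  unfold Kc
  simp only [nsmul_eq_mul, smul_eq_mul, measureReal_def]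
  ring

/-! ### The key lower bound for `Ar²` -/

lemma sqrt_lb (μ : ℝ) {ω0 s : ℝ} (hω0 : 0 < ω0) (hs : ω0 ≤ s) :
    (ω0 / (2*(2*|μ|+ω0))) * s ≤ (Real.sqrt (μ^2 + s^2) - μ) / 2 := by
  set m := |μ| with hm
  have hm0 : 0 ≤ m := abs_nonneg μ
  set k := ω0 / (2*(2*m+ω0)) with hk
  have hden : 0 < 2*(2*m+ω0) := by positivity
  have hk0 : 0 < k := by positivity
  have hkden : k * (2*(2*m+ω0)) = ω0 := by
    rw [hk]; exact div_mul_cancel₀ _ hden.ne'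
  have h2k : 2*k ≤ 1 := by nlinarith
  have hμm : μ ≤ m := le_abs_self μ
  have hs0 : 0 < s := lt_of_lt_of_le hω0 hs
  have key : μ + 2*k*s ≤ Real.sqrt (μ^2 + s^2) := by
    rcases le_or_gt (μ + 2*k*s) 0 with h | h
    · exact le_trans h (Real.sqrt_nonneg _)
    · rw [← Real.sqrt_sq h.le]
      apply Real.sqrt_le_sqrt
      nlinarith [mul_nonneg (mul_nonneg (sub_nonneg.mpr hs) (by linarith : (0:ℝ) ≤ 1-2*k)) hs0.le,
        mul_nonneg (mul_nonneg (sub_nonneg.mpr hμm) hk0.le) hs0.le,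
        mul_nonneg (mul_nonneg (by linarith : (0:ℝ) ≤ 1-2*k) hk0.le) (sq_nonneg s)]
  linarith

/-- Main per-frequency estimate: for `z` purely imaginary with `|Im z| = s ≥ ω0`,
`|g0 μ z|` is integrable with integral at most `(Kc / k) / s`. -/
lemma g0_est (μ : ℝ) {ω0 : ℝ} (hω0 : 0 < ω0) {z : ℂ} (hre : z.re = 0) {s : ℝ}
    (him : |z.im| = s) (hs : ω0 ≤ s) :
    Integrable (fun x : E3 => ‖g0 μ z x‖) ∧
    (0 ≤ ∫ x : E3, ‖g0 μ z x‖) ∧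
    (∫ x : E3, ‖g0 μ z x‖) ≤ Kc / (ω0 / (2*(2*|μ|+ω0))) / s := by
  have hs0 : 0 < s := lt_of_lt_of_le hω0 hs
  have hzim : z.im ≠ 0 := by
    intro h
    rw [h, abs_zero] at him
    linarith
  have ha : 0 < Ar μ z := Ar_pos μ hzim
  have hAsq : (Ar μ z) ^ 2 = (Real.sqrt (μ^2 + s^2) - μ) / 2 := by
    rw [Ar_sq μ hre hzim, ← him, sq_abs]
  set k := ω0 / (2*(2*|μ|+ω0)) with hk
  have hk0 : 0 < k := by positivity
  have hlb : k * s ≤ (Ar μ z) ^ 2 := by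
    rw [hAsq]
    exact sqrt_lb μ hω0 hs
  refine ⟨g0_integrable μ z ha, integral_nonneg fun x => norm_nonneg _, ?_⟩
  rw [g0_integral μ z ha, div_div]
  calc Kc * ((Ar μ z)^2)⁻¹ = Kc / ((Ar μ z)^2) := by rw [div_eq_mul_inv]
    _ ≤ Kc / (k * s) := by
        apply div_le_div_of_nonneg_left Kc_nonneg (by positivity) hlb

/-! ### Convolution identities for `conv3` -/

lemma conv3_eq (μ : ℝ) (w₁ w₂ w₃ : ℂ) :
    conv3 μ w₁ w₂ w₃ =
      (((fun x => ‖g0 μ w₃ x‖) ⋆[ContinuousLinearMap.mul ℝ ℝ]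
        (fun x => ‖g0 μ w₂ x‖)) ⋆[ContinuousLinearMap.mul ℝ ℝ]
        (fun x => ‖g0 μ w₁ x‖)) := by
  funext x
  unfold conv3
  rw [convolution_def]
  congr 1
  ext y
  rw [convolution_def]
  simp only [ContinuousLinearMap.mul_apply']
  rw [← integral_mul_const]
  congr 1
  ext z
  ring

lemma conv3_nonneg (μ : ℝ) (w₁ w₂ w₃ : ℂ) (x : E3) : 0 ≤ conv3 μ w₁ w₂ w₃ x := by
  unfold conv3
  refine integral_nonneg fun y => integral_nonneg fun z => ?_
  positivity

lemma conv3_integrable (μ : ℝ) (w₁ w₂ w₃ : ℂ)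
    (h₁ : Integrable (fun x : E3 => ‖g0 μ w₁ x‖))
    (h₂ : Integrable (fun x : E3 => ‖g0 μ w₂ x‖))
    (h₃ : Integrable (fun x : E3 => ‖g0 μ w₃ x‖)) :
    Integrable (conv3 μ w₁ w₂ w₃) := by
  rw [conv3_eq]
  exact (h₃.integrable_convolution (ContinuousLinearMap.mul ℝ ℝ) h₂).integrable_convolution _ h₁

lemma conv3_integral (μ : ℝ) (w₁ w₂ w₃ : ℂ)
    (h₁ : Integrable (fun x : E3 => ‖g0 μ w₁ x‖))
    (h₂ : Integrable (fun x : E3 => ‖g0 μ w₂ x‖))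
    (h₃ : Integrable (fun x : E3 => ‖g0 μ w₃ x‖)) :
    ∫ x : E3, conv3 μ w₁ w₂ w₃ x =
      (∫ x : E3, ‖g0 μ w₃ x‖) * (∫ x : E3, ‖g0 μ w₂ x‖)
        * (∫ x : E3, ‖g0 μ w₁ x‖) := by
  rw [conv3_eq]
  rw [integral_convolution _ (h₃.integrable_convolution (ContinuousLinearMap.mul ℝ ℝ) h₂) h₁,
    integral_convolution _ h₃ h₂]
  simp [ContinuousLinearMap.mul_apply']

lemma mul3_le {x1 x2 x3 y1 y2 y3 : ℝ} (hx1 : 0 ≤ x1) (hx2 : 0 ≤ x2) (hx3 : 0 ≤ x3)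
    (h1 : x1 ≤ y1) (h2 : x2 ≤ y2) (h3 : x3 ≤ y3) : x1*x2*x3 ≤ y1*y2*y3 :=
  mul_le_mul (mul_le_mul h1 h2 hx2 (hx1.trans h1)) h3 hx3
    (mul_nonneg (hx1.trans h1) (hx2.trans h2))

/-! ### Arithmetic lemma -/

lemma arith {Q T Tc T0 v : ℝ} (hQ : 0 ≤ Q) (hT0 : 0 < T0) (hT : T0 ≤ T) (hTc : T0 ≤ Tc)
    (hv : 1 ≤ v) :
    2*T*(v*((Q/(Real.pi*v*T))*(Q/(Real.pi*v*Tc))*(Q/(Real.pi*v*T))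
      + (Q/(Real.pi*v*Tc))*(Q/(Real.pi*v*T))*(Q/(Real.pi*v*Tc))))
      ≤ (4*Q^3/(Real.pi^3*T0^2)) * (v^2)⁻¹ := by
  have hπ := Real.pi_pos
  have hT' : 0 < T := lt_of_lt_of_le hT0 hT
  have hTc' : 0 < Tc := lt_of_lt_of_le hT0 hTc
  have hv0 : 0 < v := lt_of_lt_of_le one_pos hv
  have e : 2*T*(v*((Q/(Real.pi*v*T))*(Q/(Real.pi*v*Tc))*(Q/(Real.pi*v*T))
      + (Q/(Real.pi*v*Tc))*(Q/(Real.pi*v*T))*(Q/(Real.pi*v*Tc))))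
      = (2*Q^3/(Real.pi^3*v^2)) * (1/(T*Tc) + 1/(Tc*Tc)) := by
    field_simp
  rw [e]
  have h1 : 1/(T*Tc) ≤ 1/(T0*T0) := by
    apply one_div_le_one_div_of_le (by positivity)
    exact mul_le_mul hT hTc hT0.le hT'.le
  have h2 : 1/(Tc*Tc) ≤ 1/(T0*T0) := by
    apply one_div_le_one_div_of_le (by positivity)
    exact mul_le_mul hTc hTc hT0.le hTc'.le
  calc (2*Q^3/(Real.pi^3*v^2)) * (1/(T*Tc) + 1/(Tc*Tc))
      ≤ (2*Q^3/(Real.pi^3*v^2)) * (2/(T0*T0)) := by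
        apply mul_le_mul_of_nonneg_left _ (by positivity)
        rw [show (2:ℝ)/(T0*T0) = 1/(T0*T0) + 1/(T0*T0) by ring]
        exact add_le_add h1 h2
    _ = (4*Q^3/(Real.pi^3*T0^2)) * (v^2)⁻¹ := by
        field_simp
        ring

/-! ### Summability of `1/(2n+1)²` over `ℤ` -/

lemma sumNat : Summable (fun n : ℕ => ((2*(n:ℝ)+1)^2)⁻¹) := by
  have hbase : Summable (fun n : ℕ => (((n:ℝ)+1)^2)⁻¹) := by
    have := (summable_nat_add_iff (f := fun n : ℕ => ((n:ℝ)^2)⁻¹) 1).mpr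
      (Real.summable_one_div_nat_pow.mpr one_lt_two |>.congr (fun n => by
        simp [one_div]))
    refine this.congr fun n => ?_
    push_cast
    ring_nf
  refine Summable.of_nonneg_of_le (fun n => by positivity) (fun n => ?_) hbase
  apply inv_anti₀ (by positivity)
  have : ((n:ℝ)+1) ≤ 2*(n:ℝ)+1 := by
    have : (0:ℝ) ≤ (n:ℝ) := Nat.cast_nonneg n
    linarith
  nlinarith [Nat.cast_nonneg (α := ℝ) n]

lemma sumInt : Summable (fun n : ℤ => ((2*(n:ℝ)+1)^2)⁻¹) := by
  apply Summable.of_nat_of_neg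
  · exact sumNat.congr fun n => by norm_num
  · have : Summable (fun n : ℕ => ((2*(((n+1):ℕ):ℝ)-1)^2)⁻¹) := by
      refine sumNat.congr fun n => ?_
      push_cast
      ring_nf
    have h := (summable_nat_add_iff (f := fun n : ℕ => ((2*((n:ℕ):ℝ)-1)^2)⁻¹) 1).mp
      (this.congr fun n => by push_cast; ring_nf)
    refine h.congr fun n => ?_
    push_cast
    ring_nf

end Stmt18Aux

open Stmt18Aux in
/-- For every `μ ∈ ℝ` and `T₀ > 0` there is `C > 0` such that for all `T, T_c ≥ T₀` the
function `F_{T,T_c} = 2T Σ_{n∈ℤ} |2n+1| [ |g_0^{iω_n^T}| * |g_0^{iω_n^{T_c}}| * |g_0^{-iω_n^T}|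
+ |g_0^{iω_n^{T_c}}| * |g_0^{-iω_n^T}| * |g_0^{-iω_n^{T_c}}| ]` satisfies
`‖F_{T,T_c}‖_{L¹(ℝ³)} ≤ C`; in particular the defining series converges in `L¹(ℝ³)`
(the summands being nonnegative, this amounts to summability of their `L¹`-norms). -/
theorem stmt_18 (μ : ℝ) (T0 : ℝ) (hT0 : 0 < T0) :
    ∃ C > 0, ∀ T Tc : ℝ, T0 ≤ T → T0 ≤ Tc →
      (Summable fun n : ℤ => ∫ x : EuclideanSpace ℝ (Fin 3), FTTc_term μ T Tc n x) ∧
      (∫ x : EuclideanSpace ℝ (Fin 3), 2 * T * ∑' n : ℤ, FTTc_term μ T Tc n x) ≤ C := by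
  classical
  have hπ := Real.pi_pos
  set ω0 := Real.pi * T0 with hω0def
  have hω0 : 0 < ω0 := by positivity
  set k := ω0 / (2*(2*|μ|+ω0)) with hkdef
  have hk0 : 0 < k := by positivity
  set Q := Kc / k with hQdef
  have hQ : 0 ≤ Q := div_nonneg Kc_nonneg hk0.le
  set D := (4*Q^3/(Real.pi^3*T0^2)) with hDdef
  have hD0 : 0 ≤ D := by positivity
  set S := ∑' n : ℤ, ((2*(n:ℝ)+1)^2)⁻¹ with hSdef
  have hS0 : 0 ≤ S := tsum_nonneg fun n => by positivity
  refine ⟨D*S + 1, by positivity, fun T Tc hT hTc => ?_⟩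
  have hT' : 0 < T := lt_of_lt_of_le hT0 hT
  have hTc' : 0 < Tc := lt_of_lt_of_le hT0 hTc
  -- basic facts about u n = 2n+1
  have hu1 : ∀ n : ℤ, 1 ≤ |2*(n:ℝ)+1| := by
    intro n
    have h1 : (1:ℤ) ≤ |2*n+1| := Int.one_le_abs (by omega)
    have h2 : (2*(n:ℝ)+1) = ((2*n+1 : ℤ) : ℝ) := by push_cast; ring
    rw [h2, ← Int.cast_abs]
    exact_mod_cast h1
  -- per-n estimates
  have main : ∀ n : ℤ,
      Integrable (FTTc_term μ T Tc n) ∧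
      (0 ≤ ∫ x : EuclideanSpace ℝ (Fin 3), FTTc_term μ T Tc n x) ∧
      2*T*(∫ x : EuclideanSpace ℝ (Fin 3), FTTc_term μ T Tc n x)
        ≤ D * ((2*(n:ℝ)+1)^2)⁻¹ := by
    intro n
    set u := 2*(n:ℝ)+1 with hu
    have hu' : 1 ≤ |u| := hu1 n
    have hu0 : 0 < |u| := lt_of_lt_of_le one_pos hu'
    set z1 := Complex.I * ((Real.pi * u * T : ℝ) : ℂ) with hz1
    set z2 := Complex.I * ((Real.pi * u * Tc : ℝ) : ℂ) with hz2
    have hs1 : ω0 ≤ Real.pi * |u| * T := by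
      have h' : T0 ≤ |u| * T := by
        have := mul_le_mul hu' hT hT0.le (le_trans zero_le_one hu')
        simpa using this
      rw [hω0def, mul_assoc]
      exact mul_le_mul_of_nonneg_left h' hπ.le
    have hs2 : ω0 ≤ Real.pi * |u| * Tc := by
      have h' : T0 ≤ |u| * Tc := by
        have := mul_le_mul hu' hTc hT0.le (le_trans zero_le_one hu')
        simpa using this
      rw [hω0def, mul_assoc]
      exact mul_le_mul_of_nonneg_left h' hπ.le
    have habs1 : |(Real.pi * u * T)| = Real.pi * |u| * T := by
      rw [abs_mul, abs_mul, abs_of_pos hπ, abs_of_pos hT']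
    have habs2 : |(Real.pi * u * Tc)| = Real.pi * |u| * Tc := by
      rw [abs_mul, abs_mul, abs_of_pos hπ, abs_of_pos hTc']
    have him1 : z1.im = Real.pi * u * T := by simp [hz1]
    have him2 : z2.im = Real.pi * u * Tc := by simp [hz2]
    have hre1 : z1.re = 0 := by simp [hz1]
    have hre2 : z2.re = 0 := by simp [hz2]
    have E1 := g0_est μ hω0 (z := z1) hre1 (s := Real.pi * |u| * T)
      (by rw [him1]; exact habs1) hs1
    have E2 := g0_est μ hω0 (z := z2) hre2 (s := Real.pi * |u| * Tc)
      (by rw [him2]; exact habs2) hs2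
    have E3 := g0_est μ hω0 (z := -z1) (by simp [hre1]) (s := Real.pi * |u| * T)
      (by rw [Complex.neg_im, him1, abs_neg]; exact habs1) hs1
    have E4 := g0_est μ hω0 (z := -z2) (by simp [hre2]) (s := Real.pi * |u| * Tc)
      (by rw [Complex.neg_im, him2, abs_neg]; exact habs2) hs2
    set b1 := Q / (Real.pi * |u| * T) with hb1
    set b2 := Q / (Real.pi * |u| * Tc) with hb2
    have hc1int := conv3_integrable μ z1 z2 (-z1) E1.1 E2.1 E3.1
    have hc2int := conv3_integrable μ z2 (-z1) (-z2) E2.1 E3.1 E4.1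
    have hP1 : ∫ x : EuclideanSpace ℝ (Fin 3), conv3 μ z1 z2 (-z1) x ≤ b1 * b2 * b1 := by
      rw [conv3_integral μ z1 z2 (-z1) E1.1 E2.1 E3.1]
      exact mul3_le E3.2.1 E2.2.1 E1.2.1 E3.2.2 E2.2.2 E1.2.2
    have hP2 : ∫ x : EuclideanSpace ℝ (Fin 3), conv3 μ z2 (-z1) (-z2) x ≤ b2 * b1 * b2 := by
      rw [conv3_integral μ z2 (-z1) (-z2) E2.1 E3.1 E4.1]
      exact mul3_le E4.2.1 E3.2.1 E2.2.1 E4.2.2 E3.2.2 E2.2.2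
    have hFeq : FTTc_term μ T Tc n
        = fun x => |u| * (conv3 μ z1 z2 (-z1) x + conv3 μ z2 (-z1) (-z2) x) := rfl
    have hFint : Integrable (FTTc_term μ T Tc n) := by
      rw [hFeq]
      exact (hc1int.add hc2int).const_mul _
    have hFval : ∫ x : EuclideanSpace ℝ (Fin 3), FTTc_term μ T Tc n x
        = |u| * ((∫ x : EuclideanSpace ℝ (Fin 3), conv3 μ z1 z2 (-z1) x)
          + ∫ x : EuclideanSpace ℝ (Fin 3), conv3 μ z2 (-z1) (-z2) x) := by
      rw [hFeq, integral_const_mul, integral_add hc1int hc2int]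
    have hP1n : 0 ≤ ∫ x : EuclideanSpace ℝ (Fin 3), conv3 μ z1 z2 (-z1) x :=
      integral_nonneg (conv3_nonneg μ z1 z2 (-z1))
    have hP2n : 0 ≤ ∫ x : EuclideanSpace ℝ (Fin 3), conv3 μ z2 (-z1) (-z2) x :=
      integral_nonneg (conv3_nonneg μ z2 (-z1) (-z2))
    refine ⟨hFint, by rw [hFval]; positivity, ?_⟩
    rw [hFval]
    calc 2*T*(|u| * ((∫ x : EuclideanSpace ℝ (Fin 3), conv3 μ z1 z2 (-z1) x)
          + ∫ x : EuclideanSpace ℝ (Fin 3), conv3 μ z2 (-z1) (-z2) x))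
        ≤ 2*T*(|u| * (b1*b2*b1 + b2*b1*b2)) := by
          exact mul_le_mul_of_nonneg_left
            (mul_le_mul_of_nonneg_left (add_le_add hP1 hP2) (abs_nonneg u)) (by positivity)
      _ ≤ D * ((|u|)^2)⁻¹ := by
          rw [hb1, hb2, hDdef]
          exact arith hQ hT0 hT hTc hu'
      _ = D * (u^2)⁻¹ := by rw [sq_abs]
  -- summability
  have hsum2T : Summable (fun n : ℤ =>
      2*T*(∫ x : EuclideanSpace ℝ (Fin 3), FTTc_term μ T Tc n x)) := by
    refine Summable.of_nonneg_of_le (fun n => ?_) (fun n => (main n).2.2) (sumInt.mul_left D)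
    exact mul_nonneg (by positivity) (main n).2.1
  have hsum : Summable (fun n : ℤ => ∫ x : EuclideanSpace ℝ (Fin 3), FTTc_term μ T Tc n x) := by
    refine (hsum2T.mul_left (2*T)⁻¹).congr fun n => ?_
    rw [← mul_assoc, inv_mul_cancel₀ (by positivity), one_mul]
  refine ⟨hsum, ?_⟩
  -- the integral bound
  have hFnn : ∀ (n : ℤ) (x : EuclideanSpace ℝ (Fin 3)), 0 ≤ FTTc_term μ T Tc n x := by
    intro n x
    exact mul_nonneg (abs_nonneg _) (add_nonneg (conv3_nonneg _ _ _ _ x) (conv3_nonneg _ _ _ _ x))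
  have hnorm : Summable (fun n : ℤ =>
      ∫ x : EuclideanSpace ℝ (Fin 3), ‖FTTc_term μ T Tc n x‖) := by
    refine hsum.congr fun n => ?_
    exact (integral_congr_ae (Filter.Eventually.of_forall fun x =>
      Real.norm_of_nonneg (hFnn n x))).symm
  have hswap := (hasSum_integral_of_summable_integral_norm
    (fun n : ℤ => (main n).1) hnorm).tsum_eq
  rw [integral_const_mul, ← hswap]
  calc 2*T * ∑' n : ℤ, ∫ x : EuclideanSpace ℝ (Fin 3), FTTc_term μ T Tc n x
      = ∑' n : ℤ, 2*T*(∫ x : EuclideanSpace ℝ (Fin 3), FTTc_term μ T Tc n x) := by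
        rw [tsum_mul_left]
    _ ≤ ∑' n : ℤ, D * ((2*(n:ℝ)+1)^2)⁻¹ :=
        Summable.tsum_le_tsum (fun n => (main n).2.2) hsum2T (sumInt.mul_left D)
    _ = D * S := by rw [tsum_mul_left]
    _ ≤ D*S + 1 := by linarith
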